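/- The function U_ω(x) = μ (√(1+ω) cosh(μx) − i√(1−ω) sinh(μx)) / (1 + ω cosh(2μx)), with μ = √(1−ω²) and ω ∈ (0,1), satisfies the ODE i U' − ω U + conj(U) = 2 |U|² U, i.e. the stationary equation of the massive Gross–Neveu model with β₁ = −β₂ = 1/2. -/

import Mathlib

/-!
Writing `U = P + i Q` with `P, Q` real, the equation follows from the real system
`P' = (1 + ω - 2 (P² - Q²)) Q`, `Q' = (1 - ω - 2 (P² - Q²)) P`.
For the soliton the denominator `D = 1 + ω cosh (2 μ x)` equals
`(1 + ω) cosh² (μ x) - (1 - ω) sinh² (μ x)`, so `P² - Q² = μ² / D`; after clearing `D²` and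
using `μ = √(1 + ω) √(1 - ω)`, the two equations reduce to `D = (1 - ω) + 2 ω cosh² (μ x)` and
`D = (1 + ω) + 2 ω sinh² (μ x)`.
-/

/-- The massive Gross–Neveu line soliton profile. -/
noncomputable def grossNeveuSoliton (ω x : ℝ) : ℂ :=
  (↑(Real.sqrt (1 - ω ^ 2)) : ℂ) *
    ((↑(Real.sqrt (1 + ω) * Real.cosh (Real.sqrt (1 - ω ^ 2) * x)) : ℂ)
      - Complex.I * (↑(Real.sqrt (1 - ω) * Real.sinh (Real.sqrt (1 - ω ^ 2) * x)) : ℂ)) /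
    (↑(1 + ω * Real.cosh (2 * Real.sqrt (1 - ω ^ 2) * x)) : ℂ)

open Real ComplexConjugate

namespace GrossNeveu

open Complex in
theorem stationary_eq_of_components (ω p q : ℝ) :
    I * (((((1 + ω) - 2 * (p ^ 2 - q ^ 2)) * q : ℝ) : ℂ)
        + ((((1 - ω) - 2 * (p ^ 2 - q ^ 2)) * p : ℝ) : ℂ) * I)
        - ω * (p + q * I) + conj (p + q * I : ℂ)
      = (‖(p + q * I : ℂ)‖ : ℂ) ^ 2 * (p + q * I) + conj (p + q * I : ℂ) ^ 3 := by
  have hnorm : (‖(p + q * I : ℂ)‖ : ℂ) ^ 2 = p ^ 2 + q ^ 2 := by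
    rw [← ofReal_pow, ← normSq_eq_norm_sq, normSq_add_mul_I]
    push_cast
    ring
  simp only [hnorm, map_add, map_mul, conj_ofReal, conj_I]
  push_cast
  ring_nf
  simp only [I_sq, I_pow_three]
  ring

noncomputable def denom (ω m x : ℝ) : ℝ := 1 + ω * cosh (2 * m * x)

/-- With `m = √(1 - ω²)`, `a = √(1 + ω)`, `b = √(1 - ω)` these are the real and imaginary
parts of `grossNeveuSoliton ω`. -/
noncomputable def profileRe (ω m a x : ℝ) : ℝ := m * a * cosh (m * x) / denom ω m x

noncomputable def profileIm (ω m b x : ℝ) : ℝ := -(m * b * sinh (m * x)) / denom ω m x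

theorem grossNeveuSoliton_eq (ω : ℝ) :
    grossNeveuSoliton ω = fun x ↦
      (profileRe ω √(1 - ω ^ 2) √(1 + ω) x : ℂ)
        + (profileIm ω √(1 - ω ^ 2) √(1 - ω) x : ℂ) * Complex.I := by
  ext x
  simp only [grossNeveuSoliton, profileRe, profileIm, denom]
  push_cast
  ring

theorem denom_eq (ω m x : ℝ) :
    denom ω m x = 1 + ω * (cosh (m * x) ^ 2 + sinh (m * x) ^ 2) := by
  rw [denom, mul_assoc, cosh_two_mul]

theorem denom_pos {ω : ℝ} (hω : 0 ≤ ω) (m x : ℝ) : 0 < denom ω m x := by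
  have := mul_nonneg hω (cosh_pos (2 * m * x)).le
  rw [denom]
  linarith

theorem hasDerivAt_denom (ω m x : ℝ) :
    HasDerivAt (denom ω m) (4 * m * ω * sinh (m * x) * cosh (m * x)) x :=
  ((((hasDerivAt_id x).const_mul (2 * m)).cosh.const_mul ω).const_add 1).congr_deriv
    (by rw [id, mul_one, mul_assoc, sinh_two_mul]; ring)

section

variable {ω m a b : ℝ}

theorem profileRe_sq_sub_profileIm_sq (ha : a ^ 2 = 1 + ω) (hb : b ^ 2 = 1 - ω) (x : ℝ)
    (hD : denom ω m x ≠ 0) :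
    profileRe ω m a x ^ 2 - profileIm ω m b x ^ 2 = m ^ 2 / denom ω m x := by
  have hnum : (m * a * cosh (m * x)) ^ 2 - (-(m * b * sinh (m * x))) ^ 2
      = m ^ 2 * denom ω m x := by
    rw [denom_eq]
    linear_combination
      m ^ 2 * (cosh (m * x) ^ 2 * ha - sinh (m * x) ^ 2 * hb + cosh_sq_sub_sinh_sq (m * x))
  rw [profileRe, profileIm, div_pow, div_pow, ← sub_div, hnum]
  field_simp

theorem hasDerivAt_profileRe (hm : m = a * b) (ha : a ^ 2 = 1 + ω) (hb : b ^ 2 = 1 - ω)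
    (x : ℝ) (hD : denom ω m x ≠ 0) :
    HasDerivAt (profileRe ω m a)
      (((1 + ω) - 2 * (profileRe ω m a x ^ 2 - profileIm ω m b x ^ 2)) * profileIm ω m b x) x := by
  have hnum := ((hasDerivAt_id x).const_mul m).cosh.const_mul (m * a)
  refine (hnum.div (hasDerivAt_denom ω m x) hD).congr_deriv ?_
  rw [profileRe_sq_sub_profileIm_sq ha hb x hD, profileIm]
  simp only [id, mul_one]
  field_simp
  rw [denom_eq]
  subst hm
  set c := cosh (a * b * x)
  set s := sinh (a * b * x)
  linear_combination a * b ^ 2 * s * (1 + ω * (c ^ 2 + s ^ 2) - 4 * ω * c ^ 2 - 2 * b ^ 2) * ha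
    - 2 * a * b ^ 2 * s * (1 + ω) * hb
    - 2 * a * b ^ 2 * s * (1 + ω) * ω * cosh_sq_sub_sinh_sq (a * b * x)

theorem hasDerivAt_profileIm (hm : m = a * b) (ha : a ^ 2 = 1 + ω) (hb : b ^ 2 = 1 - ω)
    (x : ℝ) (hD : denom ω m x ≠ 0) :
    HasDerivAt (profileIm ω m b)
      (((1 - ω) - 2 * (profileRe ω m a x ^ 2 - profileIm ω m b x ^ 2)) * profileRe ω m a x) x := by
  have hnum := (((hasDerivAt_id x).const_mul m).sinh.const_mul (m * b)).neg
  refine (hnum.div (hasDerivAt_denom ω m x) hD).congr_deriv ?_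
  rw [profileRe_sq_sub_profileIm_sq ha hb x hD, profileRe]
  simp only [id, mul_one, Pi.neg_apply]
  field_simp
  rw [denom_eq]
  subst hm
  set c := cosh (a * b * x)
  set s := sinh (a * b * x)
  linear_combination a ^ 2 * b * (-(1 + ω * (c ^ 2 + s ^ 2)) + 4 * ω * s ^ 2 + 2 * a ^ 2) * hb
    + 2 * a ^ 2 * b * (1 - ω) * ha
    - 2 * a ^ 2 * b * (1 - ω) * ω * cosh_sq_sub_sinh_sq (a * b * x)

end

end GrossNeveu

open GrossNeveu

/-- The Gross–Neveu soliton satisfies `i U' − ω U + conj U = |U|² U + conj(U)³`,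
i.e. the stationary massive Gross–Neveu equation with β₁ = −β₂ = 1/2. -/
theorem grossNeveuSoliton_ode (ω : ℝ) (hω : ω ∈ Set.Ioo (0 : ℝ) 1) (x : ℝ) :
    Complex.I * deriv (grossNeveuSoliton ω) x - (ω : ℂ) * grossNeveuSoliton ω x
      + (starRingEnd ℂ) (grossNeveuSoliton ω x)
      = ((3 * (1/2 : ℂ) + (-(1/2) : ℂ)) * (↑(‖grossNeveuSoliton ω x‖) : ℂ) ^ 2
            * grossNeveuSoliton ω x)
        + ((1/2 : ℂ) - (-(1/2) : ℂ)) * ((starRingEnd ℂ) (grossNeveuSoliton ω x)) ^ 3 := by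
  obtain ⟨hω0, hω1⟩ := hω
  have hm : √(1 - ω ^ 2) = √(1 + ω) * √(1 - ω) := by
    rw [← sqrt_mul (by linarith)]
    ring_nf
  have ha : √(1 + ω) ^ 2 = 1 + ω := sq_sqrt (by linarith)
  have hb : √(1 - ω) ^ 2 = 1 - ω := sq_sqrt (by linarith)
  have hD := (denom_pos hω0.le √(1 - ω ^ 2) x).ne'
  rw [grossNeveuSoliton_eq, ((hasDerivAt_profileRe hm ha hb x hD).ofReal_comp.fun_add
    ((hasDerivAt_profileIm hm ha hb x hD).ofReal_comp.mul_const Complex.I)).deriv,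
    show 3 * (1 / 2 : ℂ) + -(1 / 2) = 1 by norm_num, show (1 / 2 : ℂ) - -(1 / 2) = 1 by norm_num,
    one_mul, one_mul]
  exact stationary_eq_of_components ω _ _
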